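/- arXiv:1511.04282 — 5 statements merged into one kernel-verified Lean document; each statement's English description precedes it below -/
import Mathlib

section
/- Let G be a connected bipartite graph with bipartition of its vertex set into nonempty independent sets I₁ and I₂. Then there is no vector λ of strictly positive arrival rates such that for every independent set I of G, the sum of λ over I is strictly less than the sum of λ over the neighborhood E(I) of I. In other words, NCOND(G) is empty for bipartite graphs. -/
open Finset

open Classical in
/-- Neighborhood (in `G`) of a finite set `A` of vertices: all vertices adjacent
to some vertex of `A`. -/
noncomputable def nbrSet {V : Type*} [Fintype V] (G : SimpleGraph V) (A : Finset V) : Finset V :=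
  Finset.univ.filter (fun j => ∃ i ∈ A, G.Adj i j)

/-- An independent set: a nonempty set of pairwise non-adjacent vertices. -/
def IsIndepSet {V : Type*} (G : SimpleGraph V) (I : Finset V) : Prop :=
  I.Nonempty ∧ ∀ i ∈ I, ∀ j ∈ I, ¬ G.Adj i j

/-- The condition NCOND: for every independent set `I`, the total rate on `I`
is strictly less than the total rate on its neighborhood. -/
def NCond {V : Type*} [Fintype V] (G : SimpleGraph V) (lam : V → ℝ) : Prop :=
  ∀ I : Finset V, IsIndepSet G I → ∑ i ∈ I, lam i < ∑ j ∈ nbrSet G I, lam j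

/-!
Each side of a bipartition is an independent set whose neighbourhood lies in the other side,
so NCOND applied to both sides gives `λ(I₁) < λ(I₂) < λ(I₁)`.
-/

section

variable {V : Type*} [Fintype V] {G : SimpleGraph V} {A B : Finset V}

theorem disjoint_nbrSet_of_pairwise_not_adj (hA : ∀ i ∈ A, ∀ j ∈ A, ¬ G.Adj i j) :
    Disjoint A (nbrSet G A) := by
  refine Finset.disjoint_left.2 fun j hjA hj => ?_
  simp only [nbrSet, mem_filter] at hj
  obtain ⟨-, i, hiA, hij⟩ := hj
  exact hA i hiA j hjA hij

theorem nbrSet_subset_of_union_eq_univ [DecidableEq V] (hA : ∀ i ∈ A, ∀ j ∈ A, ¬ G.Adj i j)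
    (hAB : A ∪ B = univ) : nbrSet G A ⊆ B := by
  intro j hj
  have hjAB : j ∈ A ∪ B := hAB ▸ mem_univ j
  exact (mem_union.1 hjAB).resolve_left
    (Finset.disjoint_right.1 (disjoint_nbrSet_of_pairwise_not_adj hA) hj)

theorem NCond.sum_lt_sum_of_union_eq_univ [DecidableEq V] {lam : V → ℝ} (hlam : NCond G lam)
    (hnonneg : ∀ v, 0 ≤ lam v) (hAne : A.Nonempty) (hA : ∀ i ∈ A, ∀ j ∈ A, ¬ G.Adj i j)
    (hAB : A ∪ B = univ) : ∑ i ∈ A, lam i < ∑ j ∈ B, lam j :=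
  calc ∑ i ∈ A, lam i < ∑ j ∈ nbrSet G A, lam j := hlam A ⟨hAne, hA⟩
    _ ≤ ∑ j ∈ B, lam j :=
      sum_le_sum_of_subset_of_nonneg (nbrSet_subset_of_union_eq_univ hA hAB)
        fun v _ _ => hnonneg v

end

theorem ncond_empty_of_bipartite_general {V : Type*} [Fintype V] [DecidableEq V] (G : SimpleGraph V)
    (I₁ I₂ : Finset V)
    (h1 : I₁.Nonempty) (h2 : I₂.Nonempty)
    (hunion : I₁ ∪ I₂ = Finset.univ)
    (hind1 : ∀ i ∈ I₁, ∀ j ∈ I₁, ¬ G.Adj i j)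
    (hind2 : ∀ i ∈ I₂, ∀ j ∈ I₂, ¬ G.Adj i j) :
    ¬ ∃ lam : V → ℝ, (∀ v, 0 < lam v) ∧ NCond G lam := by
  rintro ⟨lam, hpos, hlam⟩
  have hnonneg : ∀ v, 0 ≤ lam v := fun v => (hpos v).le
  have h12 := hlam.sum_lt_sum_of_union_eq_univ hnonneg h1 hind1 hunion
  have h21 := hlam.sum_lt_sum_of_union_eq_univ hnonneg h2 hind2 (union_comm I₂ I₁ ▸ hunion)
  exact (h12.trans h21).false

/-- for a connected bipartite graph (bipartition into nonempty
independent sets `I₁`, `I₂`), no strictly positive rate vector satisfies NCOND. -/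
theorem ncond_empty_of_bipartite {V : Type*} [Fintype V] [DecidableEq V] (G : SimpleGraph V)
    (hconn : G.Connected) (I₁ I₂ : Finset V)
    (h1 : I₁.Nonempty) (h2 : I₂.Nonempty)
    (hdisj : Disjoint I₁ I₂) (hunion : I₁ ∪ I₂ = Finset.univ)
    (hind1 : ∀ i ∈ I₁, ∀ j ∈ I₁, ¬ G.Adj i j)
    (hind2 : ∀ i ∈ I₂, ∀ j ∈ I₂, ¬ G.Adj i j) :
    ¬ ∃ lam : V → ℝ, (∀ v, 0 < lam v) ∧ NCond G lam :=
  ncond_empty_of_bipartite_general G I₁ I₂ h1 h2 hunion hind1 hind2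
end

section
/- A separable graph does not contain the pendant graph as an induced subgraph. That is, if G is separable, there do not exist four distinct vertices a, b, c, d of G such that c is adjacent to each of a, b, d, a is adjacent to b, and d is adjacent to neither a nor b. -/
open Finset

/-- A maximal independent set: independent, and every outside vertex has a neighbor inside. -/
def IsMaxIndep {V : Type*} (G : SimpleGraph V) (I : Finset V) : Prop :=
  IsIndepSet G I ∧ ∀ j, j ∉ I → ∃ i ∈ I, G.Adj i j

/-- `G` is separable of order `q`. -/
def SeparableOfOrder {V : Type*} (G : SimpleGraph V) (q : ℕ) : Prop :=
  ∃ P : Fin q → Finset V,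
    (∀ v : V, ∃! k : Fin q, v ∈ P k) ∧
    (∀ k, IsMaxIndep G (P k)) ∧
    (∀ k l : Fin q, k ≠ l → ∀ u ∈ P k, ∀ v ∈ P l, G.Adj u v)

theorem SeparableOfOrder.isCompleteMultipartite {V : Type*} {G : SimpleGraph V} {q : ℕ}
    (hG : SeparableOfOrder G q) : G.IsCompleteMultipartite := by
  obtain ⟨P, hcover, hmaxIndep, hcross⟩ := hG
  choose part mem_part using fun v => (hcover v).exists
  have part_eq_of_not_adj {u v : V} (huv : ¬ G.Adj u v) : part u = part v :=
    by_contra fun hne => huv (hcross _ _ hne u (mem_part u) v (mem_part v))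
  refine ⟨fun u v w huv hvw huw => ?_⟩
  have hw : w ∈ P (part u) :=
    (part_eq_of_not_adj huv).trans (part_eq_of_not_adj hvw) ▸ mem_part w
  exact (hmaxIndep (part u)).1.2 u (mem_part u) w hw huw

theorem separable_no_induced_pendant_general {V : Type*} (G : SimpleGraph V)
    (hsep : ∃ q : ℕ, 2 ≤ q ∧ SeparableOfOrder G q) :
    ¬ ∃ a b c d : V, a ≠ b ∧ a ≠ c ∧ a ≠ d ∧ b ≠ c ∧ b ≠ d ∧ c ≠ d ∧
      G.Adj c a ∧ G.Adj c b ∧ G.Adj c d ∧ G.Adj a b ∧ ¬ G.Adj d a ∧ ¬ G.Adj d b := by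
  rintro ⟨a, b, -, d, -, -, -, -, -, -, -, -, -, hab, hda, hdb⟩
  obtain ⟨q, -, hq⟩ := hsep
  exact SimpleGraph.not_isCompleteMultipartite_iff_exists_isPathGraph3Compl.2
    ⟨d, a, b, ⟨hab, hda, hdb⟩⟩ hq.isCompleteMultipartite

/-- a separable graph does not contain the pendant graph as an induced
subgraph: there are no four distinct vertices `a, b, c, d` such that `c` is adjacent to
each of `a, b, d`, `a` is adjacent to `b`, and `d` is adjacent to neither `a` nor `b`. -/
theorem separable_no_induced_pendant {V : Type*} [Fintype V] (G : SimpleGraph V)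
    (hsep : ∃ q : ℕ, 2 ≤ q ∧ SeparableOfOrder G q) :
    ¬ ∃ a b c d : V, a ≠ b ∧ a ≠ c ∧ a ≠ d ∧ b ≠ c ∧ b ≠ d ∧ c ≠ d ∧
      G.Adj c a ∧ G.Adj c b ∧ G.Adj c d ∧ G.Adj a b ∧ ¬ G.Adj d a ∧ ¬ G.Adj d b :=
  separable_no_induced_pendant_general G hsep
end

section
/- Every connected graph that is non-bipartite and non-separable contains, as an induced subgraph, either the pendant graph or an odd cycle of length at least 5. -/
/-!
If `G` has no triangle, take a shortest closed walk of odd length (one exists since `G` is not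
2-colourable). A repeated vertex or a chord would split it into two shorter closed walks whose
lengths sum to its length plus an even number, so one of them is odd; hence it is an induced
cycle, of length at least 5 as `G` is triangle-free.

If `G` has a triangle but no induced pendant graph, then a vertex adjacent to a triangle vertex
is adjacent to one of the other two. Along paths this puts every vertex, hence every edge, in a
triangle, and then shows that every vertex is adjacent to an end of any given edge. So
non-adjacency is transitive: `G` is complete multipartite, and its at least two parts make it
separable.
-/

open Finset

/-- `G` is bipartite: its vertex set can be partitioned into two (possibly empty)
independent sets. -/
def IsBipartite {V : Type*} [Fintype V] [DecidableEq V] (G : SimpleGraph V) : Prop :=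
  ∃ A B : Finset V, Disjoint A B ∧ A ∪ B = Finset.univ ∧
    (∀ i ∈ A, ∀ j ∈ A, ¬ G.Adj i j) ∧ (∀ i ∈ B, ∀ j ∈ B, ¬ G.Adj i j)

/-- `G` contains the pendant graph as an induced subgraph. -/
def HasInducedPendant {V : Type*} (G : SimpleGraph V) : Prop :=
  ∃ a b c d : V, a ≠ b ∧ a ≠ c ∧ a ≠ d ∧ b ≠ c ∧ b ≠ d ∧ c ≠ d ∧
    G.Adj c a ∧ G.Adj c b ∧ G.Adj c d ∧ G.Adj a b ∧ ¬ G.Adj d a ∧ ¬ G.Adj d b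

/-- `G` contains an induced odd cycle of length `2p+1 ≥ 5`. -/
def HasInducedLongOddCycle {V : Type*} (G : SimpleGraph V) : Prop :=
  ∃ p : ℕ, 2 ≤ p ∧ ∃ v : ZMod (2 * p + 1) → V, Function.Injective v ∧
    (∀ k : ZMod (2 * p + 1), G.Adj (v k) (v (k + 1))) ∧
    (∀ i j : ZMod (2 * p + 1), i ≠ j → j ≠ i + 1 → i ≠ j + 1 → ¬ G.Adj (v i) (v j))

lemma isBipartite_of_colorable_two {V : Type*} [Fintype V] [DecidableEq V] {G : SimpleGraph V}
    (h : G.Colorable 2) : IsBipartite G := by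
  obtain ⟨C⟩ := h
  refine ⟨univ.filter (C · = 0), univ.filter (C · ≠ 0), disjoint_filter_filter_not _ _ _,
    filter_union_filter_not_eq _ _, ?_, ?_⟩ <;>
  · intro i hi j hj hij
    simp only [mem_filter, mem_univ, true_and] at hi hj
    exact C.valid hij (by omega)

lemma exists_odd_loop_of_not_isBipartite {V : Type*} [Fintype V] [DecidableEq V]
    {G : SimpleGraph V} (h : ¬ IsBipartite G) : ∃ u, ∃ w : G.Walk u u, Odd w.length := by
  by_contra! hodd
  exact h (isBipartite_of_colorable_two (SimpleGraph.two_colorable_iff_forall_loop_even.mpr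
    fun u w => Nat.not_odd_iff_even.mp (hodd u w)))

namespace SimpleGraph

variable {V : Type*} {G : SimpleGraph V}

lemma Connected.forall_of_adj_imp (hG : G.Connected) {P : V → Prop}
    (hP : ∀ ⦃u v⦄, G.Adj u v → P u → P v) {a : V} (ha : P a) (v : V) : P v := by
  induction (reachable_iff_reflTransGen a v).mp (hG a v) with
  | refl => exact ha
  | tail _ huv ih => exact hP huv ih

namespace Walk

lemma exists_walk_getVert_getVert {u v : V} (w : G.Walk u v) {a b : ℕ} (hab : a ≤ b)
    (hb : b ≤ w.length) : ∃ p : G.Walk (w.getVert a) (w.getVert b), p.length = b - a :=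
  ⟨((w.drop a).take (b - a)).copy rfl (by rw [drop_getVert, Nat.add_sub_cancel' hab]),
    by simp; omega⟩

def IsShortestOddClosed {u : V} (w : G.Walk u u) : Prop :=
  Odd w.length ∧ ∀ v (c : G.Walk v v), Odd c.length → w.length ≤ c.length

lemma exists_isShortestOddClosed (h : ∃ u, ∃ w : G.Walk u u, Odd w.length) :
    ∃ u, ∃ w : G.Walk u u, w.IsShortestOddClosed := by
  classical
  have h' : ∃ n, ∃ u, ∃ w : G.Walk u u, Odd w.length ∧ w.length = n :=
    let ⟨u, w, hw⟩ := h; ⟨_, u, w, hw, rfl⟩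
  obtain ⟨u, w, hodd, hlen⟩ := Nat.find_spec h'
  exact ⟨u, w, hodd, fun v c hc => hlen ▸ Nat.find_min' h' ⟨v, c, hc, rfl⟩⟩

variable {u : V} {w : G.Walk u u}

/-- A walk `q` between two vertices of `w` splits `w` into two closed walks of total length
`w.length + 2 * q.length`, one of which is odd. -/
lemma IsShortestOddClosed.length_le_or_le_of_shortcut (hw : w.IsShortestOddClosed) {a b : ℕ}
    (hab : a ≤ b) (hb : b ≤ w.length) (q : G.Walk (w.getVert b) (w.getVert a)) :
    w.length ≤ b - a + q.length ∨ b - a ≤ q.length := by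
  obtain ⟨p₁, hp₁⟩ := w.exists_walk_getVert_getVert hab hb
  obtain ⟨p₂, hp₂⟩ := w.exists_walk_getVert_getVert hb le_rfl
  obtain ⟨p₃, hp₃⟩ := w.exists_walk_getVert_getVert (Nat.zero_le a) (hab.trans hb)
  rcases Nat.even_or_odd (b - a + q.length) with ⟨s, hs⟩ | hodd
  · right
    obtain ⟨t, ht⟩ := hw.1
    have := hw.2 _ ((p₂.copy rfl w.getVert_length).append
      ((p₃.copy w.getVert_zero rfl).append q.reverse)) ⟨t + q.length - s, by simp; omega⟩
    simp only [length_append, length_copy, length_reverse] at this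
    omega
  · left
    simpa [hp₁] using hw.2 _ (p₁.append q) (by simpa [hp₁] using hodd)

lemma IsShortestOddClosed.getVert_ne (hw : w.IsShortestOddClosed) {a b : ℕ} (hab : a < b)
    (hb : b < w.length) : w.getVert a ≠ w.getVert b := by
  intro h
  have := hw.length_le_or_le_of_shortcut hab.le hb.le (nil.copy rfl h.symm)
  simp only [length_copy, length_nil, add_zero] at this
  omega

lemma IsShortestOddClosed.eq_of_adj_getVert (hw : w.IsShortestOddClosed) {a b : ℕ} (hab : a < b)
    (hb : b < w.length) (hadj : G.Adj (w.getVert a) (w.getVert b)) :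
    b = a + 1 ∨ (a = 0 ∧ b = w.length - 1) := by
  have := hw.length_le_or_le_of_shortcut hab.le hb.le hadj.symm.toWalk
  simp only [length_cons, length_nil, zero_add] at this
  omega

lemma IsShortestOddClosed.five_le_length (hw : w.IsShortestOddClosed) (h3 : G.CliqueFree 3) :
    5 ≤ w.length := by
  classical
  have hstep (i : ℕ) (hi : i < w.length) : G.Adj (w.getVert i) (w.getVert (i + 1)) :=
    w.adj_getVert_succ hi
  have hlast (i : ℕ) (hi : i + 1 = w.length) : G.Adj (w.getVert i) u := by
    simpa [hi] using hstep i (by omega)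
  obtain ⟨t, ht⟩ := hw.1
  rcases (by omega : t = 0 ∨ t = 1 ∨ 2 ≤ t) with rfl | rfl | _
  · exact absurd w.getVert_zero (hlast 0 ht.symm).ne
  · have h01 : G.Adj u (w.getVert 1) := by simpa using hstep 0 (by omega)
    have h20 : G.Adj (w.getVert 2) u := hlast 2 (by omega)
    exact (h3 _ (is3Clique_triple_iff.mpr ⟨h01, h20.symm, hstep 1 (by omega)⟩)).elim
  · omega

lemma IsShortestOddClosed.hasInducedLongOddCycle (hw : w.IsShortestOddClosed)
    (h5 : 5 ≤ w.length) : HasInducedLongOddCycle G := by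
  obtain ⟨p, hp⟩ := hw.1
  have : NeZero (2 * p + 1) := ⟨by omega⟩
  have hval (k : ZMod (2 * p + 1)) : k.val < w.length := by rw [hp]; exact k.val_lt
  have hcast (k : ZMod (2 * p + 1)) : ((k.val : ℕ) : ZMod (2 * p + 1)) = k :=
    ZMod.natCast_zmod_val k
  have hsucc (k : ZMod (2 * p + 1)) : w.getVert (k + 1).val = w.getVert (k.val + 1) := by
    rw [← hcast k, ← Nat.cast_add_one, ZMod.val_natCast, hcast]
    rcases (Nat.add_one_le_of_lt k.val_lt).lt_or_eq with h | h
    · rw [Nat.mod_eq_of_lt h]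
    · rw [h, Nat.mod_self, getVert_zero, ← hp, getVert_length]
  have hchord (i j : ZMod (2 * p + 1)) (hij : i.val < j.val)
      (hadj : G.Adj (w.getVert i.val) (w.getVert j.val)) : j = i + 1 ∨ i = j + 1 := by
    rcases hw.eq_of_adj_getVert hij (hval j) hadj with h | ⟨hi, hj⟩
    · left
      rw [← hcast j, h, Nat.cast_add_one, hcast]
    · right
      rw [← hcast i, ← hcast j, hi, hj, ← Nat.cast_add_one, hp, Nat.add_sub_cancel,
        ZMod.natCast_self, Nat.cast_zero]
  refine ⟨p, by omega, fun k => w.getVert k.val, ?_, fun k => ?_,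
    fun i j hij hji hij' hadj => ?_⟩
  · intro i j hij
    by_contra hne
    rcases lt_or_gt_of_ne (fun h => hne (ZMod.val_injective _ h)) with h | h
    · exact hw.getVert_ne h (hval j) hij
    · exact hw.getVert_ne h (hval i) hij.symm
  · simpa only [hsucc] using w.adj_getVert_succ (hval k)
  · rcases lt_trichotomy i.val j.val with h | h | h
    · exact (hchord i j h hadj).elim hji hij'
    · exact hij (ZMod.val_injective _ h)
    · exact (hchord j i h hadj.symm).elim hij' hji

end Walk

lemma adj_or_adj_of_not_hasInducedPendant (hG : ¬ HasInducedPendant G) {a b c x : V}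
    (hab : G.Adj a b) (hac : G.Adj a c) (hbc : G.Adj b c) (hxa : G.Adj x a) :
    G.Adj x b ∨ G.Adj x c := by
  by_contra! h
  have hxb : x ≠ b := fun e => h.2 (e ▸ hbc)
  have hxc : x ≠ c := fun e => h.1 (e ▸ hbc.symm)
  exact hG ⟨b, c, a, x, hbc.ne, hab.ne', hxb.symm, hac.ne', hxc.symm, hxa.ne', hab, hac, hxa.symm,
    hbc, h.1, h.2⟩

lemma exists_triangle_of_not_hasInducedPendant (hG : ¬ HasInducedPendant G)
    (hconn : G.Connected) (h3 : ¬ G.CliqueFree 3) (v : V) :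
    ∃ x y, G.Adj v x ∧ G.Adj v y ∧ G.Adj x y := by
  classical
  obtain ⟨s, hs⟩ : ∃ s, G.IsNClique 3 s := by simpa [CliqueFree] using h3
  obtain ⟨a, b, c, hab, hac, hbc, -⟩ := is3Clique_iff.mp hs
  refine hconn.forall_of_adj_imp (P := fun v => ∃ x y, G.Adj v x ∧ G.Adj v y ∧ G.Adj x y)
    (fun u w huw ⟨x, y, hux, huy, hxy⟩ => ?_) ⟨b, c, hab, hac, hbc⟩ v
  rcases adj_or_adj_of_not_hasInducedPendant hG hux huy hxy huw.symm with h | h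
  exacts [⟨u, x, huw.symm, h, hux⟩, ⟨u, y, huw.symm, h, huy⟩]

lemma exists_common_neighbor_of_not_hasInducedPendant (hG : ¬ HasInducedPendant G)
    (hconn : G.Connected) (h3 : ¬ G.CliqueFree 3) {u v : V} (huv : G.Adj u v) :
    ∃ t, G.Adj u t ∧ G.Adj v t := by
  obtain ⟨x, y, hux, huy, hxy⟩ := exists_triangle_of_not_hasInducedPendant hG hconn h3 u
  rcases adj_or_adj_of_not_hasInducedPendant hG hux huy hxy huv.symm with h | h
  exacts [⟨x, hux, h⟩, ⟨y, huy, h⟩]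

lemma adj_or_adj_of_adj_of_common_neighbor (hG : ¬ HasInducedPendant G) {a b t x y : V}
    (hab : G.Adj a b) (hat : G.Adj a t) (hbt : G.Adj b t) (hxa : G.Adj x a) (hxy : G.Adj x y) :
    G.Adj y a ∨ G.Adj y b := by
  by_contra! hy
  have hxb : ¬ G.Adj x b := fun hxb =>
    (adj_or_adj_of_not_hasInducedPendant hG hxa hxb hab hxy.symm).elim hy.1 hy.2
  have hxt : G.Adj x t :=
    (adj_or_adj_of_not_hasInducedPendant hG hab hat hbt hxa).resolve_left hxb
  have hyt : G.Adj y t :=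
    (adj_or_adj_of_not_hasInducedPendant hG hxa hxt hat hxy.symm).resolve_left hy.1
  exact (adj_or_adj_of_not_hasInducedPendant hG hxt.symm hyt.symm hxy hbt).elim
    (fun h => hxb h.symm) (fun h => hy.2 h.symm)

lemma isCompleteMultipartite_of_not_hasInducedPendant (hG : ¬ HasInducedPendant G)
    (hconn : G.Connected) (h3 : ¬ G.CliqueFree 3) : G.IsCompleteMultipartite := by
  by_contra hcm
  obtain ⟨v, a, b, hab, hva, hvb⟩ := exists_isPathGraph3Compl_of_not_isCompleteMultipartite hcm
  obtain ⟨t, hat, hbt⟩ := exists_common_neighbor_of_not_hasInducedPendant hG hconn h3 hab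
  have hclosed :
      ∀ ⦃x y⦄, G.Adj x y → G.Adj x a ∨ G.Adj x b → G.Adj y a ∨ G.Adj y b := by
    rintro x y hxy (hxa | hxb)
    · exact adj_or_adj_of_adj_of_common_neighbor hG hab hat hbt hxa hxy
    · exact (adj_or_adj_of_adj_of_common_neighbor hG hab.symm hbt hat hxb hxy).symm
  exact (hconn.forall_of_adj_imp hclosed (Or.inl hat.symm) v).elim hva hvb

lemma IsCompleteMultipartite.separableOfOrder [Fintype V] (h : G.IsCompleteMultipartite) :
    SeparableOfOrder G (Nat.card (Quotient h.setoid)) := by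
  classical
  let e := Finite.equivFin (Quotient h.setoid)
  let part (v : V) : Fin (Nat.card (Quotient h.setoid)) := e (Quotient.mk _ v)
  have hpart (u v : V) : part u = part v ↔ ¬ G.Adj u v :=
    e.injective.eq_iff.trans Quotient.eq
  refine ⟨fun k => univ.filter (part · = k),
    fun v => ⟨part v, by simp, fun k hk => by simp_all⟩, fun k => ?_,
    fun k l hkl u hu v hv => ?_⟩
  · obtain ⟨x, hx⟩ : ∃ x, part x = k := ⟨(e.symm k).out, by simp [part]⟩
    refine ⟨⟨⟨x, ?_⟩, fun i hi j hj => ?_⟩, fun j hj => ⟨x, ?_, ?_⟩⟩ <;>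
      simp only [mem_filter, mem_univ, true_and] at *
    · exact hx
    · exact (hpart i j).mp (hi.trans hj.symm)
    · exact hx
    · exact not_not.mp fun hxj => hj (((hpart x j).mpr hxj).symm.trans hx)
  · simp only [mem_filter, mem_univ, true_and] at hu hv
    exact not_not.mp fun huv => hkl (hu.symm.trans (((hpart u v).mpr huv).trans hv))

lemma IsCompleteMultipartite.one_lt_card_quotient [Finite V] (h : G.IsCompleteMultipartite)
    {u v : V} (huv : G.Adj u v) : 1 < Nat.card (Quotient h.setoid) :=
  Finite.one_lt_card_iff_nontrivial.mpr
    ⟨⟨_, _, fun huv' => (Quotient.eq.mp huv' : ¬ G.Adj u v) huv⟩⟩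

end SimpleGraph

/-- every connected graph which is non-bipartite and non-separable
contains, as an induced subgraph, the pendant graph or an odd cycle of length at
least 5. -/
theorem induced_pendant_or_long_odd_cycle {V : Type*} [Fintype V] [DecidableEq V]
    (G : SimpleGraph V) (hconn : G.Connected)
    (hnb : ¬ IsBipartite G)
    (hns : ¬ ∃ q : ℕ, 2 ≤ q ∧ SeparableOfOrder G q) :
    HasInducedPendant G ∨ HasInducedLongOddCycle G := by
  refine or_iff_not_imp_left.mpr fun hpaw => ?_
  by_cases h3 : G.CliqueFree 3
  · obtain ⟨u, w, hw⟩ := SimpleGraph.Walk.exists_isShortestOddClosed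
      (exists_odd_loop_of_not_isBipartite hnb)
    exact hw.hasInducedLongOddCycle (hw.five_le_length h3)
  · have hcm := SimpleGraph.isCompleteMultipartite_of_not_hasInducedPendant hpaw hconn h3
    obtain ⟨v⟩ := hconn.nonempty
    obtain ⟨u, -, huv, -⟩ :=
      SimpleGraph.exists_triangle_of_not_hasInducedPendant hpaw hconn h3 v
    exact absurd ⟨_, hcm.one_lt_card_quotient huv, hcm.separableOfOrder⟩ hns
end

section
/- For the pendant graph with vertices {1,2,3,4} and edges {1,2},{1,3},{2,3},{3,4}, a strictly positive vector λ = (λ₁,λ₂,λ₃,λ₄) belongs to NCOND(G) if and only if it satisfies: λ₄ < λ₃, λ₃ < λ₄ + λ₁ + λ₂, λ₄ + λ₁ < λ₃ + λ₂, and λ₄ + λ₂ < λ₃ + λ₁ (together with λ₁ < λ₂ + λ₃ and λ₂ < λ₁ + λ₃, which follow automatically from positivity). -/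
open Finset

/-- The pendant graph, on vertices `0,1,2,3` (paper labels `1,2,3,4`), with edges
`{0,1}, {0,2}, {1,2}, {2,3}`. -/
def pendant : SimpleGraph (Fin 4) :=
  SimpleGraph.fromRel (fun a b =>
    (a = 0 ∧ b = 1) ∨ (a = 0 ∧ b = 2) ∨ (a = 1 ∧ b = 2) ∨ (a = 2 ∧ b = 3))

lemma mem_nbrSet {V : Type*} [Fintype V] {G : SimpleGraph V} {A : Finset V} {j : V} :
    j ∈ nbrSet G A ↔ ∃ i ∈ A, G.Adj i j := by
  simp [nbrSet]

lemma nCond_iff_forall_mem {V : Type*} [Fintype V] {G : SimpleGraph V} (lam : V → ℝ)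
    {S : Finset (Finset V)} (hS : ∀ I, IsIndepSet G I ↔ I ∈ S) :
    NCond G lam ↔ ∀ I ∈ S, ∑ i ∈ I, lam i < ∑ j ∈ nbrSet G I, lam j :=
  forall_congr' fun I => by rw [hS]

instance : DecidableRel pendant.Adj := fun a b =>
  decidable_of_iff _ (SimpleGraph.fromRel_adj _ a b).symm

lemma pendant_isIndepSet_iff (I : Finset (Fin 4)) :
    IsIndepSet pendant I ↔ I ∈ ({{0}, {1}, {2}, {3}, {0, 3}, {1, 3}} : Finset (Finset (Fin 4))) := by
  unfold IsIndepSet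
  revert I
  decide

lemma pendant_nbrSet_zero : nbrSet pendant {0} = {1, 2} := by
  ext j; simp only [mem_nbrSet]; revert j; decide
lemma pendant_nbrSet_one : nbrSet pendant {1} = {0, 2} := by
  ext j; simp only [mem_nbrSet]; revert j; decide
lemma pendant_nbrSet_two : nbrSet pendant {2} = {0, 1, 3} := by
  ext j; simp only [mem_nbrSet]; revert j; decide
lemma pendant_nbrSet_three : nbrSet pendant {3} = {2} := by
  ext j; simp only [mem_nbrSet]; revert j; decide
lemma pendant_nbrSet_zero_three : nbrSet pendant {0, 3} = {1, 2} := by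
  ext j; simp only [mem_nbrSet]; revert j; decide
lemma pendant_nbrSet_one_three : nbrSet pendant {1, 3} = {0, 2} := by
  ext j; simp only [mem_nbrSet]; revert j; decide

theorem ncond_pendant_iff_general (lam : Fin 4 → ℝ) :
    NCond pendant lam ↔
      (lam 3 < lam 2 ∧ lam 2 < lam 3 + lam 0 + lam 1 ∧
       lam 3 + lam 0 < lam 2 + lam 1 ∧ lam 3 + lam 1 < lam 2 + lam 0 ∧
       lam 0 < lam 1 + lam 2 ∧ lam 1 < lam 0 + lam 2) := by
  rw [nCond_iff_forall_mem lam pendant_isIndepSet_iff]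
  simp only [Finset.mem_insert, Finset.mem_singleton, forall_eq_or_imp, forall_eq,
    pendant_nbrSet_zero, pendant_nbrSet_one, pendant_nbrSet_two, pendant_nbrSet_three,
    pendant_nbrSet_zero_three, pendant_nbrSet_one_three]
  simp (disch := decide) only [Finset.sum_insert, Finset.sum_singleton]
  constructor
  · rintro ⟨h0, h1, h2, h3, h03, h13⟩
    refine ⟨?_, ?_, ?_, ?_, ?_, ?_⟩ <;> linarith
  · rintro ⟨h3, h2, h03, h13, h0, h1⟩
    refine ⟨?_, ?_, ?_, ?_, ?_, ?_⟩ <;> linarith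

/-- for the pendant graph, a strictly positive vector `λ` satisfies NCOND
iff `λ₄ < λ₃ < λ₄+λ₁+λ₂`, `λ₄+λ₁ < λ₃+λ₂`, `λ₄+λ₂ < λ₃+λ₁` (together with
`λ₁ < λ₂+λ₃` and `λ₂ < λ₁+λ₃`). Here vertex `i` of the paper is `i-1 : Fin 4`. -/
theorem ncond_pendant_iff (lam : Fin 4 → ℝ) (hpos : ∀ i, 0 < lam i) :
    NCond pendant lam ↔
      (lam 3 < lam 2 ∧ lam 2 < lam 3 + lam 0 + lam 1 ∧
       lam 3 + lam 0 < lam 2 + lam 1 ∧ lam 3 + lam 1 < lam 2 + lam 0 ∧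
       lam 0 < lam 1 + lam 2 ∧ lam 1 < lam 0 + lam 2) :=
  ncond_pendant_iff_general lam
end

section
/- For every ε ∈ (0, 2/5], the vector λ = (ε/2, ε/2, 1/2 − ε/4, 1/2 − 3ε/4) satisfies all the NCOND inequalities of the pendant graph (λ₄ < λ₃ < λ₄+λ₁+λ₂, λ₄+λ₁ < λ₃+λ₂, λ₄+λ₂ < λ₃+λ₁, and all entries positive), yet λ₄ ≥ α·λ₃ where α = (λ₃² − (λ₁−λ₂)²)/(λ₃(λ₃+λ₁+λ₂)). More precisely, λ₄ − αλ₃ = (ε/4)(1 − 5ε/2)/(1/2 + 3ε/4) ≥ 0. -/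
/-!
With `λ₁ = λ₂` the correction term `(λ₁ - λ₂)²` in `α` vanishes, so `α λ₃ = λ₃² / (λ₃ + 2λ₁)`
and `λ₄ - α λ₃` becomes a single rational function of `ε`. Its numerator `ε/4 - 5ε²/8` factors as
`(ε/4)(1 - 5ε/2)`, which is nonnegative exactly for `ε ≤ 2/5`; the NCOND inequalities are linear in
`ε` and hold on the whole range.
-/

theorem pendant_alpha_mul_of_eq (a l3 : ℝ) :
    (l3 ^ 2 - (a - a) ^ 2) / (l3 * (l3 + a + a)) * l3 = l3 ^ 2 / (l3 + a + a) := by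
  rcases eq_or_ne l3 0 with rfl | hl3
  · simp
  · rw [sub_self, zero_pow two_ne_zero, sub_zero, div_mul_eq_mul_div, mul_comm l3 (l3 + a + a),
      mul_div_mul_right _ _ hl3]

/-- for every `ε ∈ (0, 2/5]`, the vector
`λ = (ε/2, ε/2, 1/2 − ε/4, 1/2 − 3ε/4)` satisfies all NCOND inequalities of the
pendant graph, yet `λ₄ − αλ₃ = (ε/4)(1 − 5ε/2)/(1/2 + 3ε/4) ≥ 0`, where
`α = (λ₃² − (λ₁−λ₂)²)/(λ₃(λ₃+λ₁+λ₂))`. -/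
theorem pendant_ncond_not_sufficient (ε l1 l2 l3 l4 α : ℝ)
    (hε0 : 0 < ε) (hε : ε ≤ 2 / 5)
    (e1 : l1 = ε / 2) (e2 : l2 = ε / 2)
    (e3 : l3 = 1 / 2 - ε / 4) (e4 : l4 = 1 / 2 - 3 * ε / 4)
    (eα : α = (l3 ^ 2 - (l1 - l2) ^ 2) / (l3 * (l3 + l1 + l2))) :
    (0 < l1 ∧ 0 < l2 ∧ 0 < l3 ∧ 0 < l4) ∧
    (l4 < l3 ∧ l3 < l4 + l1 + l2 ∧ l4 + l1 < l3 + l2 ∧ l4 + l2 < l3 + l1) ∧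
    l4 - α * l3 = (ε / 4) * (1 - 5 * ε / 2) / (1 / 2 + 3 * ε / 4) ∧
    0 ≤ l4 - α * l3 := by
  subst e1 e2 e3 e4 eα
  have hden : (0 : ℝ) < 1 / 2 + 3 * ε / 4 := by linarith
  have gap : (1 / 2 - 3 * ε / 4) - (1 / 2 - ε / 4) ^ 2 / ((1 / 2 - ε / 4) + ε / 2 + ε / 2) =
      (ε / 4) * (1 - 5 * ε / 2) / (1 / 2 + 3 * ε / 4) := by
    rw [show (1 / 2 - ε / 4) + ε / 2 + ε / 2 = 1 / 2 + 3 * ε / 4 by ring]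
    field_simp
    ring
  rw [pendant_alpha_mul_of_eq, gap]
  refine ⟨⟨by linarith, by linarith, by linarith, by linarith⟩,
    ⟨by linarith, by linarith, by linarith, by linarith⟩, rfl, ?_⟩
  have hfactor : 0 ≤ 1 - 5 * ε / 2 := by linarith
  positivity
end
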